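/- arXiv:2203.15681 — 4 statements merged into one kernel-verified Lean document; each statement's English description precedes it below -/
import Mathlib

section
/- Define a_0 = 1/2 and, for each integer i ≥ 1, a_i = (1 − 2^{1−2i})·ζ(2i), where ζ is the Riemann zeta function. Then there exists a constant C > 1 such that for every integer i ≥ 0: 1/(C·2^{2i}) < a_{i+1} − a_i < C/2^{2i}. -/
/-! Splitting the series of `ζ s` into even and odd terms shows that `(1 - 2 ^ (1 - s)) * ζ s`
is the alternating series `∑ (-1) ^ n / (n + 1) ^ s`. Its terms decrease, so its value lies between
`1 - 2⁻ˢ` and `1 - 2⁻ˢ + 3⁻ˢ`. Hence `a (i + 1) - a i` is `3 / 4 ^ (i + 1)` up to an error of at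
most `9⁻ⁱ ≤ (4 / 9) * 4⁻ⁱ` (for `i ≥ 1`), and `C = 5` works. -/

lemma hasSum_alternating_one_div_nat_add_one_cpow {s : ℂ} (hs : 1 < s.re) :
    HasSum (fun n : ℕ => (-1) ^ n * (1 / ((n : ℂ) + 1) ^ s))
      ((1 - 2 ^ (1 - s)) * riemannZeta s) := by
  set F : ℕ → ℂ := fun n => 1 / ((n : ℂ) + 1) ^ s
  have hF : HasSum F (riemannZeta s) := by
    rw [zeta_eq_tsum_one_div_nat_add_one_cpow hs]
    refine Summable.hasSum ?_
    simpa [F] using (summable_nat_add_iff 1).mpr (Complex.summable_one_div_nat_cpow.mpr hs)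
  have hFodd (k : ℕ) : F (2 * k + 1) = 2 ^ (-s) * F k := by
    have h : ((2 * k + 1 : ℕ) : ℂ) + 1 = ((2 : ℝ) : ℂ) * ((k + 1 : ℝ) : ℂ) := by push_cast; ring
    simp only [F, h, Complex.mul_cpow_ofReal_nonneg zero_le_two (by positivity : (0 : ℝ) ≤ k + 1),
      Complex.cpow_neg]
    push_cast
    field_simp
  have hodd : HasSum (fun k => F (2 * k + 1)) (2 ^ (-s) * riemannZeta s) := by
    simpa only [hFodd] using hF.mul_left (2 ^ (-s))
  obtain ⟨E, heven⟩ : Summable (fun k => F (2 * k)) :=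
    hF.summable.comp_injective fun _ _ h => by omega
  have hE : E + 2 ^ (-s) * riemannZeta s = riemannZeta s := (heven.even_add_odd hodd).unique hF
  have htwo : (2 : ℂ) ^ (1 - s) = 2 * 2 ^ (-s) := by
    rw [sub_eq_add_neg, Complex.cpow_add _ _ two_ne_zero, Complex.cpow_one]
  have heven' : HasSum (fun k => (-1) ^ (2 * k) * F (2 * k)) E := by simpa [pow_mul] using heven
  have hodd' : HasSum (fun k => (-1) ^ (2 * k + 1) * F (2 * k + 1))
      (-(2 ^ (-s) * riemannZeta s)) := by
    simpa [pow_succ, pow_mul] using hodd.neg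
  have hvalue : (1 - 2 ^ (1 - s)) * riemannZeta s = E + -(2 ^ (-s) * riemannZeta s) := by
    rw [htwo]
    linear_combination -hE
  rw [hvalue]
  exact HasSum.even_add_odd (f := fun n => (-1) ^ n * F n) heven' hodd'

lemma hasSum_alternating_one_div_nat_add_one_pow {s : ℕ} (hs : 1 < s) {x : ℝ}
    (hx : (x : ℂ) = (1 - 2 ^ (1 - (s : ℂ))) * riemannZeta s) :
    HasSum (fun n : ℕ => (-1) ^ n * (1 / ((n : ℝ) + 1) ^ s)) x := by
  rw [← Complex.hasSum_ofReal, hx]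
  convert hasSum_alternating_one_div_nat_add_one_cpow (s := s) (by simpa using hs) using 2 with n
  push_cast
  rw [Complex.cpow_natCast]

lemma Antitone.hasSum_alternating_bounds {f : ℕ → ℝ} (hf : Antitone f) {l : ℝ}
    (hl : HasSum (fun n => (-1) ^ n * f n) l) : f 0 - f 1 ≤ l ∧ l ≤ f 0 - f 1 + f 2 := by
  have h := hl.tendsto_sum_nat
  constructor
  · simpa [Finset.sum_range_succ, sub_eq_add_neg] using hf.alternating_series_le_tendsto h 1
  · simpa [Finset.sum_range_succ, sub_eq_add_neg] using hf.tendsto_le_alternating_series h 1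

lemma antitone_one_div_nat_add_one_pow (s : ℕ) : Antitone fun n : ℕ => 1 / ((n : ℝ) + 1) ^ s :=
  fun m n hmn => one_div_le_one_div_of_le (by positivity) (by gcongr)

lemma bounds_of_ofReal_eq_one_sub_two_cpow_mul_riemannZeta {s : ℕ} (hs : 1 < s) {x : ℝ}
    (hx : (x : ℂ) = (1 - 2 ^ (1 - (s : ℂ))) * riemannZeta s) :
    1 - 1 / 2 ^ s ≤ x ∧ x ≤ 1 - 1 / 2 ^ s + 1 / 3 ^ s := by
  have := (antitone_one_div_nat_add_one_pow s).hasSum_alternating_bounds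
    (hasSum_alternating_one_div_nat_add_one_pow hs hx)
  convert this using 3 <;> norm_num

lemma one_div_three_pow_le {n : ℕ} (hn : 2 ≤ n) : 1 / (3 : ℝ) ^ n ≤ 4 / 9 * (1 / 2 ^ n) :=
  calc 1 / (3 : ℝ) ^ n = (2 / 3) ^ n * (1 / 2 ^ n) := by rw [div_pow]; field_simp
    _ ≤ (2 / 3) ^ 2 * (1 / 2 ^ n) := by
      gcongr ?_ * _
      exact pow_le_pow_of_le_one (by norm_num) (by norm_num) hn
    _ = 4 / 9 * (1 / 2 ^ n) := by norm_num

/-- Lemma 3.1 (2): with `a 0 = 1/2` and `a i = (1 - 2^(1-2i)) ζ(2i)` for `i ≥ 1`,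
there is a constant `C > 1` with `1/(C·4^i) < a (i+1) - a i < C/4^i` for all `i`. -/
theorem stmt3 (a : ℕ → ℝ)
    (h0 : a 0 = 1 / 2)
    (hi : ∀ i : ℕ, 1 ≤ i →
      (a i : ℂ) = (1 - (2 : ℂ) ^ ((1 : ℂ) - 2 * (i : ℂ))) * riemannZeta (2 * (i : ℂ))) :
    ∃ C : ℝ, 1 < C ∧ ∀ i : ℕ,
      1 / (C * 2 ^ (2 * i)) < a (i + 1) - a i ∧ a (i + 1) - a i < C / 2 ^ (2 * i) := by
  have bounds (i : ℕ) (hi1 : 1 ≤ i) :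
      1 - 1 / 2 ^ (2 * i) ≤ a i ∧ a i ≤ 1 - 1 / 2 ^ (2 * i) + 1 / 3 ^ (2 * i) :=
    bounds_of_ofReal_eq_one_sub_two_cpow_mul_riemannZeta (by omega) (by push_cast; exact hi i hi1)
  refine ⟨5, by norm_num, fun i => ?_⟩
  rcases Nat.eq_zero_or_pos i with rfl | hpos
  · obtain ⟨hlow, hup⟩ := bounds 1 le_rfl
    norm_num [h0] at hlow hup ⊢
    constructor <;> linarith
  · obtain ⟨hlow, hup⟩ := bounds i hpos
    obtain ⟨hlow', hup'⟩ := bounds (i + 1) (by omega)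
    have hyx := one_div_three_pow_le (n := 2 * i) (by omega)
    set x : ℝ := 1 / 2 ^ (2 * i)
    set y : ℝ := 1 / 3 ^ (2 * i)
    have hx' : 1 / (2 : ℝ) ^ (2 * (i + 1)) = x / 4 := by rw [mul_add, pow_add]; ring
    have hy' : 1 / (3 : ℝ) ^ (2 * (i + 1)) = y / 9 := by rw [mul_add, pow_add]; ring
    have hx0 : 0 < x := by positivity
    rw [hx'] at hlow' hup'
    rw [hy'] at hup'
    have hC : 1 / (5 * (2 : ℝ) ^ (2 * i)) = x / 5 := by simp only [x]; field_simp
    rw [hC, ← mul_one_div 5]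
    constructor <;> linarith
end

section
/- Define a_0 = 1/2 and, for each integer i ≥ 1, a_i = (1 − 2^{1−2i})·ζ(2i), where ζ is the Riemann zeta function. Then there exists a constant C > 0 such that for every integer k ≥ 1, the series Σ_{L=1}^∞ (L+k)(a_{L+k} − a_L) converges and satisfies Σ_{L=1}^∞ (L+k)(a_{L+k} − a_L) ≤ C·k. -/
/-!
For `i ≥ 1`, `a i = (1 - 2·4⁻ⁱ) ζ(2i)` and `1 ≤ ζ(2i) ≤ 1 + 4·4⁻ⁱ` (compare the tail
`Σ_{m ≥ 2} m^{-2i}` with `4^{1-i} Σ_{m ≥ 2} m^{-2}` and use `ζ(2) = π²/6 < 2`), so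
`|a i - 1| ≤ 8·4⁻ⁱ`. Hence `|a (L+1+k) - a (L+1)| ≤ 4·4^{-L}`, and the series is dominated by
`Σ 4 (L + 1 + k) 4^{-L} = 64/9 + 16k/3 ≤ 13k`.
-/

open Complex Real

lemma hasSum_one_div_nat_add_two_sq :
    HasSum (fun m : ℕ => 1 / ((m : ℝ) + 2) ^ 2) (π ^ 2 / 6 - 1) := by
  have h := (hasSum_nat_add_iff' 2).mpr hasSum_zeta_two
  norm_num [Finset.sum_range_succ] at h
  simpa [one_div] using h

lemma one_div_nat_add_two_pow_le {n : ℕ} (hn : 2 ≤ n) (m : ℕ) :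
    1 / ((m : ℝ) + 2) ^ n ≤ 4 * (1 / 2) ^ n * (1 / ((m : ℝ) + 2) ^ 2) := by
  obtain ⟨j, rfl⟩ := Nat.exists_eq_add_of_le hn
  have hm : (2 : ℝ) ≤ m + 2 := by linarith [m.cast_nonneg (α := ℝ)]
  calc 1 / ((m : ℝ) + 2) ^ (2 + j) = (1 / ((m : ℝ) + 2)) ^ j * (1 / ((m : ℝ) + 2) ^ 2) := by
        rw [pow_add, one_div_pow, one_div_mul_one_div, mul_comm]
    _ ≤ (1 / 2) ^ j * (1 / ((m : ℝ) + 2) ^ 2) := by gcongr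
    _ = 4 * (1 / 2) ^ (2 + j) * (1 / ((m : ℝ) + 2) ^ 2) := by ring

lemma tsum_one_div_nat_pow_le {n : ℕ} (hn : 2 ≤ n) :
    ∑' m : ℕ, 1 / (m : ℝ) ^ n ≤ 1 + 4 * (1 / 2) ^ n := by
  have hs : Summable fun m : ℕ => 1 / (m : ℝ) ^ n := Real.summable_one_div_nat_pow.mpr (by omega)
  have hpi : π ^ 2 / 6 - 1 ≤ 1 := by nlinarith [pi_lt_d2, pi_pos]
  have htail : ∑' m : ℕ, 1 / ((m + 2 : ℕ) : ℝ) ^ n ≤ 4 * (1 / 2) ^ n := by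
    refine (hasSum_le (fun m => ?_) ((summable_nat_add_iff 2).mpr hs).hasSum
      (hasSum_one_div_nat_add_two_sq.mul_left _)).trans
      (mul_le_of_le_one_right (by positivity) hpi)
    push_cast
    exact one_div_nat_add_two_pow_le hn m
  rw [← hs.sum_add_tsum_nat_add 2]
  norm_num [Finset.sum_range_succ, zero_pow (by omega : n ≠ 0)] at htail ⊢
  linarith

lemma one_le_tsum_one_div_nat_pow {n : ℕ} (hn : 1 < n) : 1 ≤ ∑' m : ℕ, 1 / (m : ℝ) ^ n := by
  simpa using (Real.summable_one_div_nat_pow.mpr hn).le_tsum 1 fun m _ => by positivity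

lemma riemannZeta_natCast_eq_ofReal_tsum {n : ℕ} (hn : 1 < n) :
    riemannZeta n = ((∑' m : ℕ, 1 / (m : ℝ) ^ n : ℝ) : ℂ) := by
  rw [zeta_nat_eq_tsum_of_gt_one hn, ofReal_tsum]
  push_cast
  rfl

lemma two_cpow_one_sub_two_mul (i : ℕ) :
    (2 : ℂ) ^ ((1 : ℂ) - 2 * (i : ℂ)) = ((2 * (1 / 4 : ℝ) ^ i : ℝ) : ℂ) := by
  have he : (1 : ℂ) - 2 * (i : ℂ) = ((1 - 2 * i : ℤ) : ℂ) := by push_cast; ring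
  rw [he, cpow_intCast, zpow_sub₀ two_ne_zero, zpow_mul, zpow_one, zpow_natCast, one_div_pow,
    ← div_eq_mul_one_div]
  norm_num

lemma one_sub_two_cpow_mul_riemannZeta_eq_ofReal {i : ℕ} (hi : 1 ≤ i) :
    (1 - (2 : ℂ) ^ ((1 : ℂ) - 2 * (i : ℂ))) * riemannZeta (2 * (i : ℂ)) =
      (((1 - 2 * (1 / 4 : ℝ) ^ i) * ∑' m : ℕ, 1 / (m : ℝ) ^ (2 * i) : ℝ) : ℂ) := by
  have h2i : (2 * (i : ℂ)) = ((2 * i : ℕ) : ℂ) := by push_cast; ring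
  rw [two_cpow_one_sub_two_mul, h2i, riemannZeta_natCast_eq_ofReal_tsum (by omega)]
  push_cast
  ring

lemma abs_one_sub_mul_tsum_sub_one_le {i : ℕ} (hi : 1 ≤ i) :
    |(1 - 2 * (1 / 4 : ℝ) ^ i) * ∑' m : ℕ, 1 / (m : ℝ) ^ (2 * i) - 1| ≤ 8 * (1 / 4) ^ i := by
  have hz₁ := one_le_tsum_one_div_nat_pow (n := 2 * i) (by omega)
  have hz₂ := tsum_one_div_nat_pow_le (n := 2 * i) (by omega)
  rw [pow_mul, show (1 / 2 : ℝ) ^ 2 = 1 / 4 by norm_num] at hz₂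
  have hx₀ : (0 : ℝ) < (1 / 4) ^ i := by positivity
  have hx₁ : (1 / 4 : ℝ) ^ i ≤ 1 / 4 := pow_le_of_le_one (by norm_num) (by norm_num) (by omega)
  rw [abs_le]
  constructor <;> nlinarith

lemma abs_sub_le_of_abs_sub_one_le {a : ℕ → ℝ}
    (ha : ∀ i, 1 ≤ i → |a i - 1| ≤ 8 * (1 / 4 : ℝ) ^ i) (L k : ℕ) :
    |a (L + 1 + k) - a (L + 1)| ≤ 4 * (1 / 4) ^ L := by
  have hmono : (1 / 4 : ℝ) ^ (L + 1 + k) ≤ (1 / 4) ^ (L + 1) :=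
    pow_le_pow_of_le_one (by norm_num) (by norm_num) (by omega)
  calc |a (L + 1 + k) - a (L + 1)| = |(a (L + 1 + k) - 1) - (a (L + 1) - 1)| := by ring_nf
    _ ≤ |a (L + 1 + k) - 1| + |a (L + 1) - 1| := abs_sub _ _
    _ ≤ 8 * (1 / 4) ^ (L + 1 + k) + 8 * (1 / 4) ^ (L + 1) :=
        add_le_add (ha _ (by omega)) (ha _ (by omega))
    _ ≤ 4 * (1 / 4) ^ L := by rw [pow_succ] at hmono ⊢; linarith

lemma hasSum_add_mul_geometric {r : ℝ} (hr₀ : 0 ≤ r) (hr₁ : r < 1) (c : ℝ) :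
    HasSum (fun n : ℕ => ((n : ℝ) + c) * r ^ n) (r / (1 - r) ^ 2 + c * (1 - r)⁻¹) := by
  have hr : ‖r‖ < 1 := by rwa [Real.norm_of_nonneg hr₀]
  simpa only [add_mul] using
    (hasSum_coe_mul_geometric_of_norm_lt_one hr).add
      ((hasSum_geometric_of_lt_one hr₀ hr₁).mul_left c)

lemma summable_and_tsum_le_of_abs_sub_one_le {a : ℕ → ℝ}
    (ha : ∀ i, 1 ≤ i → |a i - 1| ≤ 8 * (1 / 4 : ℝ) ^ i) {k : ℕ} (hk : 1 ≤ k) :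
    Summable (fun L : ℕ => (((L + 1) + k : ℕ) : ℝ) * (a ((L + 1) + k) - a (L + 1))) ∧
      ∑' L : ℕ, (((L + 1) + k : ℕ) : ℝ) * (a ((L + 1) + k) - a (L + 1)) ≤ 13 * k := by
  set f : ℕ → ℝ := fun L => (((L + 1) + k : ℕ) : ℝ) * (a ((L + 1) + k) - a (L + 1))
  have hg := (hasSum_add_mul_geometric (r := 1 / 4) (by norm_num) (by norm_num) (1 + k)).mul_left 4
  have hfg : ∀ L, ‖f L‖ ≤ 4 * (((L : ℝ) + (1 + k)) * (1 / 4) ^ L) := fun L => by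
    rw [Real.norm_eq_abs, abs_mul, Nat.abs_cast]
    calc _ ≤ (((L + 1) + k : ℕ) : ℝ) * (4 * (1 / 4) ^ L) := by
          gcongr; exact abs_sub_le_of_abs_sub_one_le ha L k
      _ = _ := by push_cast; ring
  have hf : Summable f := hg.summable.of_norm_bounded hfg
  refine ⟨hf, (hasSum_le (fun L => (le_abs_self _).trans (hfg L)) hf.hasSum hg).trans ?_⟩
  have hk' : (1 : ℝ) ≤ k := by exact_mod_cast hk
  norm_num
  linarith

theorem stmt4_general (a : ℕ → ℝ)
    (hi : ∀ i : ℕ, 1 ≤ i →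
      (a i : ℂ) = (1 - (2 : ℂ) ^ ((1 : ℂ) - 2 * (i : ℂ))) * riemannZeta (2 * (i : ℂ))) :
    ∃ C : ℝ, 0 < C ∧ ∀ k : ℕ, 1 ≤ k →
      Summable (fun L : ℕ => (((L + 1) + k : ℕ) : ℝ) * (a ((L + 1) + k) - a (L + 1))) ∧
      ∑' L : ℕ, (((L + 1) + k : ℕ) : ℝ) * (a ((L + 1) + k) - a (L + 1)) ≤ C * k := by
  have ha : ∀ i, 1 ≤ i → |a i - 1| ≤ 8 * (1 / 4 : ℝ) ^ i := fun i h1 => by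
    have h := hi i h1
    rw [one_sub_two_cpow_mul_riemannZeta_eq_ofReal h1, ofReal_inj] at h
    rw [h]
    exact abs_one_sub_mul_tsum_sub_one_le h1
  exact ⟨13, by norm_num, fun k hk => summable_and_tsum_le_of_abs_sub_one_le ha hk⟩

/-- Equation (3.2): with `a 0 = 1/2` and `a i = (1 - 2^(1-2i)) ζ(2i)` for `i ≥ 1`,
there is `C > 0` such that for every `k ≥ 1` the series
`Σ_{L=1}^∞ (L+k)(a_{L+k} - a_L)` converges and is at most `C·k`. -/
theorem stmt4 (a : ℕ → ℝ)
    (h0 : a 0 = 1 / 2)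
    (hi : ∀ i : ℕ, 1 ≤ i →
      (a i : ℂ) = (1 - (2 : ℂ) ^ ((1 : ℂ) - 2 * (i : ℂ))) * riemannZeta (2 * (i : ℂ))) :
    ∃ C : ℝ, 0 < C ∧ ∀ k : ℕ, 1 ≤ k →
      Summable (fun L : ℕ => (((L + 1) + k : ℕ) : ℝ) * (a ((L + 1) + k) - a (L + 1))) ∧
      ∑' L : ℕ, (((L + 1) + k : ℕ) : ℝ) * (a ((L + 1) + k) - a (L + 1)) ≤ C * k :=
  stmt4_general a hi
end

section
/- For every real t > 0, the series Σ_{k=1}^∞ t^{2k} / (k! · (2k)!) converges and satisfies Σ_{k=1}^∞ t^{2k} / (k! · (2k)!) < e^{3 t^{2/3}}. -/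
open scoped Nat

lemma fact3_le (m : ℕ) : ((3 * m).factorial : ℝ) ≤ 27 ^ m * m.factorial * (2 * m).factorial := by
  have h1 : (3 * m).choose m * m.factorial * (3 * m - m).factorial = (3 * m).factorial :=
    Nat.choose_mul_factorial_mul_factorial (by omega)
  have h2 : 3 * m - m = 2 * m := by omega
  rw [h2] at h1
  have hc : (3 * m).choose m ≤ 2 ^ (3 * m) := by
    calc (3 * m).choose m ≤ ∑ i ∈ Finset.range (3 * m + 1), (3 * m).choose i :=
          Finset.single_le_sum (fun i _ => Nat.zero_le _) (by simp; omega)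
      _ = 2 ^ (3 * m) := Nat.sum_range_choose _
  have h8 : (2 : ℕ) ^ (3 * m) = 8 ^ m := by rw [pow_mul]; norm_num
  have : (3 * m).factorial ≤ 27 ^ m * m.factorial * (2 * m).factorial := by
    rw [← h1]
    have : (3 * m).choose m ≤ 27 ^ m :=
      hc.trans (by rw [h8]; exact Nat.pow_le_pow_left (by norm_num) m)
    exact Nat.mul_le_mul_right _ (Nat.mul_le_mul_right _ this)
  exact_mod_cast this

/-- Inequality (5.5): for `t > 0`, `Σ_{k=1}^∞ t^(2k)/(k!(2k)!) < e^(3 t^(2/3))`. -/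
theorem stmt9 (t : ℝ) (ht : 0 < t) :
    Summable (fun k : ℕ => t ^ (2 * (k + 1)) /
      (((k + 1).factorial : ℝ) * ((2 * (k + 1)).factorial : ℝ))) ∧
    ∑' k : ℕ, t ^ (2 * (k + 1)) /
        (((k + 1).factorial : ℝ) * ((2 * (k + 1)).factorial : ℝ)) <
      Real.exp (3 * t ^ ((2 : ℝ) / 3)) := by
  set s : ℝ := t ^ ((2 : ℝ) / 3) with hs
  have hspos : 0 < s := Real.rpow_pos_of_pos ht _
  have hs3 : ∀ m : ℕ, t ^ (2 * m) = s ^ (3 * m) := by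
    intro m
    rw [hs, ← Real.rpow_natCast t (2 * m), ← Real.rpow_natCast (t ^ ((2:ℝ)/3)) (3 * m),
      ← Real.rpow_mul ht.le]
    congr 1
    push_cast; ring
  -- exp series
  have hg : Summable (fun n : ℕ => (3 * s) ^ n / n !) := Real.summable_pow_div_factorial _
  have hgsum : ∑' n : ℕ, (3 * s) ^ n / n ! = Real.exp (3 * s) := by
    rw [Real.exp_eq_exp_ℝ, NormedSpace.exp_eq_tsum_div]
  -- shifted exp series
  have hh : Summable (fun n : ℕ => (3 * s) ^ (n + 1) / (n + 1)!) :=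
    (summable_nat_add_iff 1).mpr hg
  have hhsum : ∑' n : ℕ, (3 * s) ^ (n + 1) / (n + 1)! = Real.exp (3 * s) - 1 := by
    have := Summable.tsum_eq_zero_add hg
    simp only [pow_zero, Nat.factorial_zero, Nat.cast_one, div_one] at this
    rw [hgsum] at this
    linarith
  -- termwise bound
  have hbound : ∀ k : ℕ, t ^ (2 * (k + 1)) /
      (((k + 1).factorial : ℝ) * ((2 * (k + 1)).factorial : ℝ)) ≤
      (3 * s) ^ (3 * (k + 1)) / (3 * (k + 1))! := by
    intro k
    set m := k + 1
    have hf1 : (0 : ℝ) < (m.factorial : ℝ) * ((2 * m).factorial : ℝ) := by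
      positivity
    have hf2 : (0 : ℝ) < ((3 * m).factorial : ℝ) := by positivity
    rw [hs3 m, div_le_div_iff₀ hf1 hf2, mul_pow]
    have h27 : (3 : ℝ) ^ (3 * m) = 27 ^ m := by rw [pow_mul]; norm_num
    rw [h27]
    have hf := fact3_le m
    have hsp : 0 < s ^ (3 * m) := pow_pos hspos _
    nlinarith [hf, hsp]
  have hterm_nonneg : ∀ k : ℕ, 0 ≤ t ^ (2 * (k + 1)) /
      (((k + 1).factorial : ℝ) * ((2 * (k + 1)).factorial : ℝ)) := by
    intro k; positivity
  -- summability
  have hhsub : Summable (fun k : ℕ => (3 * s) ^ (3 * (k + 1)) / ((3 * (k + 1))! : ℝ)) := by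
    have hinj : Function.Injective (fun k : ℕ => 3 * (k + 1)) := fun a b h => by dsimp only at h; omega
    exact hg.comp_injective hinj
  have hsummable : Summable (fun k : ℕ => t ^ (2 * (k + 1)) /
      (((k + 1).factorial : ℝ) * ((2 * (k + 1)).factorial : ℝ))) :=
    Summable.of_nonneg_of_le hterm_nonneg hbound hhsub
  refine ⟨hsummable, ?_⟩
  have hle : ∑' k : ℕ, t ^ (2 * (k + 1)) /
      (((k + 1).factorial : ℝ) * ((2 * (k + 1)).factorial : ℝ)) ≤
      ∑' n : ℕ, (3 * s) ^ (n + 1) / (n + 1)! := by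
    apply Summable.tsum_le_tsum_of_inj (fun k : ℕ => 3 * k + 2)
      (fun a b h => by dsimp only at h; omega)
      (fun c _ => by positivity)
      (fun k => by
        have e : 3 * k + 2 + 1 = 3 * (k + 1) := by omega
        calc t ^ (2 * (k + 1)) / (((k + 1).factorial : ℝ) * ((2 * (k + 1)).factorial : ℝ))
            ≤ (3 * s) ^ (3 * (k + 1)) / ((3 * (k + 1))! : ℝ) := hbound k
          _ = (3 * s) ^ (3 * k + 2 + 1) / ((3 * k + 2 + 1)! : ℝ) := by rw [e])
      hsummable hh
  calc _ ≤ Real.exp (3 * s) - 1 := hhsum ▸ hle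
    _ < Real.exp (3 * s) := by linarith
end

section
/- For every real a > 0 there exists a constant C > 0 such that for every integer g ≥ 2: Σ_{m=2}^{⌊4 log g⌋} (2am/√g)^m · a√g · m² ≤ C/√g. -/
/-! For `m ≤ 4 log g` we have `√g ≥ exp (m / 8)`, so `√g ^ (m - 2) ≥ exp (m (m - 2) / 8)` and the
`m`-th term is at most `termMajorant a m / √g`, where `termMajorant a m = a m² (2 a m exp (-(m - 2) / 8)) ^ m`
does not depend on `g`. Its base `2 a m exp (-(m - 2) / 8)` tends to `0`, so the majorant is summable and
`C = ∑' m, termMajorant a m + 1` works. -/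

open Real Filter Topology Finset

lemma summable_natCast_pow_mul_pow_self {b : ℕ → ℝ} (hb : Tendsto b atTop (𝓝 0)) (k : ℕ) :
    Summable fun n : ℕ => (n : ℝ) ^ k * b n ^ n := by
  refine (summable_pow_mul_geometric_of_norm_lt_one k (r := (1 / 2 : ℝ)) (by norm_num))
    |>.of_norm_bounded_eventually_nat ?_
  filter_upwards [hb.norm.eventually (gt_mem_nhds (show ‖(0 : ℝ)‖ < 1 / 2 by norm_num))]
    with n hn
  rw [norm_mul, norm_pow, norm_pow, norm_natCast]
  gcongr

lemma tendsto_mul_natCast_mul_exp_neg_sub_two_div_eight (c : ℝ) :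
    Tendsto (fun m : ℕ => c * m * exp (-((m : ℝ) - 2) / 8)) atTop (𝓝 0) := by
  have hr : exp (-1 / 8) < 1 := exp_lt_one_iff.2 (by norm_num)
  have h := (tendsto_self_mul_const_pow_of_lt_one (exp_pos _).le hr).const_mul (c * exp (1 / 4))
  rw [mul_zero] at h
  refine h.congr fun m => ?_
  rw [← exp_nat_mul, mul_assoc c, mul_assoc c, mul_left_comm (exp _), ← exp_add]
  ring_nf

noncomputable def termMajorant (a : ℝ) (m : ℕ) : ℝ :=
  a * m ^ 2 * (2 * a * m * exp (-((m : ℝ) - 2) / 8)) ^ m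

lemma termMajorant_nonneg {a : ℝ} (ha : 0 ≤ a) (m : ℕ) : 0 ≤ termMajorant a m := by
  unfold termMajorant
  positivity

lemma summable_termMajorant (a : ℝ) : Summable (termMajorant a) := by
  have h := (summable_natCast_pow_mul_pow_self
    (tendsto_mul_natCast_mul_exp_neg_sub_two_div_eight (2 * a)) 2).mul_left a
  refine h.congr fun m => ?_
  unfold termMajorant
  ring

lemma exp_div_eight_le_sqrt {x y : ℝ} (hx : 0 < x) (hy : y ≤ 4 * log x) :
    exp (y / 8) ≤ √x := by
  rw [le_sqrt (exp_pos _).le hx.le, ← exp_nat_mul, ← exp_log hx, exp_le_exp]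
  push_cast
  linarith

lemma div_pow_mul_le {c s : ℝ} {m : ℕ} (hc : 0 ≤ c) (hm : 2 ≤ m) (hs : exp (m / 8) ≤ s) :
    (c / s) ^ m * s ≤ (c * exp (-((m : ℝ) - 2) / 8)) ^ m / s := by
  obtain ⟨k, rfl⟩ : ∃ k, m = k + 2 := ⟨m - 2, by omega⟩
  have hs0 : 0 < s := (exp_pos _).trans_le hs
  have hinv : (s ^ k)⁻¹ ≤ exp (-((↑(k + 2) : ℝ) - 2) / 8) ^ (k + 2) :=
    calc (s ^ k)⁻¹ ≤ (exp ((↑(k + 2) : ℝ) / 8) ^ k)⁻¹ := by gcongr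
      _ = exp (-((↑(k + 2) : ℝ) - 2) / 8) ^ (k + 2) := by
        rw [← exp_nat_mul, ← exp_nat_mul, ← exp_neg]
        push_cast
        ring_nf
  calc (c / s) ^ (k + 2) * s = c ^ (k + 2) * (s ^ k)⁻¹ / s := by
        rw [div_pow]
        field_simp
        ring
    _ ≤ c ^ (k + 2) * exp (-((↑(k + 2) : ℝ) - 2) / 8) ^ (k + 2) / s := by gcongr
    _ = _ := by rw [mul_pow]

lemma term_le_termMajorant_div {a s : ℝ} {m : ℕ} (ha : 0 ≤ a) (hm : 2 ≤ m)
    (hs : exp (m / 8) ≤ s) :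
    (2 * a * m / s) ^ m * (a * s) * (m : ℝ) ^ 2 ≤ termMajorant a m / s :=
  calc (2 * a * m / s) ^ m * (a * s) * (m : ℝ) ^ 2
      = a * m ^ 2 * ((2 * a * m / s) ^ m * s) := by ring
    _ ≤ a * m ^ 2 * ((2 * a * m * exp (-((m : ℝ) - 2) / 8)) ^ m / s) := by
      gcongr
      exact div_pow_mul_le (by positivity) hm hs
    _ = termMajorant a m / s := by
      unfold termMajorant
      ring

/-- Case IV estimate in the proof of Proposition 3.7: for each `a > 0` there is
`C > 0` with `Σ_{m=2}^{⌊4 log g⌋} (2am/√g)^m · a√g · m² ≤ C/√g` for all `g ≥ 2`. -/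
theorem stmt15 (a : ℝ) (ha : 0 < a) :
    ∃ C : ℝ, 0 < C ∧ ∀ g : ℕ, 2 ≤ g →
      ∑ m ∈ Finset.Icc 2 (Nat.floor (4 * Real.log g)),
          (2 * a * (m : ℝ) / Real.sqrt g) ^ m * (a * Real.sqrt g) * (m : ℝ) ^ 2 ≤
        C / Real.sqrt g := by
  have hv := summable_termMajorant a
  have hv0 := termMajorant_nonneg ha.le
  refine ⟨∑' m, termMajorant a m + 1, by linarith [(tsum_nonneg hv0 : 0 ≤ ∑' m, termMajorant a m)], fun g hg => ?_⟩
  have hg0 : (0 : ℝ) < g := Nat.cast_pos.2 (by omega)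
  calc ∑ m ∈ Icc 2 ⌊4 * log g⌋₊, (2 * a * m / √g) ^ m * (a * √g) * (m : ℝ) ^ 2
      ≤ ∑ m ∈ Icc 2 ⌊4 * log g⌋₊, termMajorant a m / √g := by
        refine sum_le_sum fun m hm => ?_
        obtain ⟨h2, hN⟩ := mem_Icc.1 hm
        exact term_le_termMajorant_div ha.le h2
          (exp_div_eight_le_sqrt hg0 ((Nat.le_floor_iff' (by omega)).1 hN))
    _ = (∑ m ∈ Icc 2 ⌊4 * log g⌋₊, termMajorant a m) / √g := (sum_div ..).symm
    _ ≤ (∑' m, termMajorant a m + 1) / √g := by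
        gcongr
        linarith [hv.sum_le_tsum (Icc 2 ⌊4 * log g⌋₊) fun m _ => hv0 m]
end
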